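/- arXiv:1809.11012 — 2 statements merged into one kernel-verified Lean document; each statement's English description precedes it below -/
import Mathlib

section
/- Let κ, c_s, c_p > 0, let D ⊆ ℝ² be open, and let u : D × [0,∞) → ℝ² satisfy: (i) for each x ∈ D, t ↦ u(x,t) is twice continuously differentiable with u(x,0) = 0 and ∂_t u(x,0) = 0; (ii) for each x ∈ D, each j ∈ {0,1,2} and each k ∈ ℕ, the function t ↦ e^{−κt} t^k ∂_t^j u(x,t) is integrable on (0,∞), and for j ∈ {0,1} it tends to 0 as t → ∞; (iii) for each t > 0, u(·,t) is twice continuously differentiable on D and ∂_t² u(x,t) = Δ*u(x,t) for all (x,t) ∈ D × (0,∞); (iv) for each n ∈ ℕ, the Fourier–Laguerre coefficient u_n(x) = ∫_0^∞ e^{−κt} L_n(κt) u(x,t) dt is twice continuously differentiable on D and satisfies Δ*u_n(x) = ∫_0^∞ e^{−κt} L_n(κt) (Δ*u)(x,t) dt for all x ∈ D. Then for every n ∈ ℕ and all x ∈ D one has Δ*u_n(x) − κ² u_n(x) = ∑_{m=0}^{n−1} κ²(n−m+1) u_m(x). -/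
/-!
Write `φₙ(t) = e^{-κt} Lₙ(κt)`, so that `uₙ = ∫₀^∞ φₙ u`. The Laguerre identity
`L'ₙ = -∑_{m<n} Lₘ` gives `φ'ₙ = -κ ∑_{m≤n} φₘ` and hence `φ''ₙ = κ² ∑_{m≤n} (n-m+1) φₘ`.
Integrating by parts twice in time (the boundary terms vanish at `0` by the homogeneous initial
data and at `∞` by the decay assumptions) turns `Δ*uₙ = ∫ φₙ ∂ₜ²u` into `∫ φ''ₙ u`, which is
`κ² ∑_{m≤n} (n-m+1) uₘ`; its term `m = n` is `κ² uₙ`.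
-/

open Real Filter MeasureTheory


/-- Laguerre polynomial L_n(x) = ∑_{k=0}^n (−1)^k (n choose k) x^k / k! -/
noncomputable def lagPoly (n : ℕ) (x : ℝ) : ℝ :=
  ∑ k ∈ Finset.range (n + 1), (-1 : ℝ) ^ k * (n.choose k : ℝ) * x ^ k / (k.factorial : ℝ)

/-- partial derivative ∂_i of a scalar field on ℝ² = Fin 2 → ℝ -/
noncomputable def pd (i : Fin 2) (g : (Fin 2 → ℝ) → ℝ) (x : Fin 2 → ℝ) : ℝ :=
  fderiv ℝ g x (Pi.single i 1)

/-- the Lamé operator Δ* v = c_s² Δ v + (c_p² − c_s²) ∇ (div v) -/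
noncomputable def lame (cs cp : ℝ) (v : (Fin 2 → ℝ) → (Fin 2 → ℝ)) (x : Fin 2 → ℝ) :
    Fin 2 → ℝ :=
  fun j =>
    cs ^ 2 * (pd 0 (pd 0 (fun y => v y j)) x + pd 1 (pd 1 (fun y => v y j)) x)
      + (cp ^ 2 - cs ^ 2) *
          pd j (fun y => pd 0 (fun z => v z 0) y + pd 1 (fun z => v z 1) y) x

/-- Fourier–Laguerre coefficient u_n(x) = ∫₀^∞ e^{−κt} L_n(κt) u(x,t) dt -/
noncomputable def lagCoeff (κ : ℝ) (u : (Fin 2 → ℝ) → ℝ → (Fin 2 → ℝ)) (n : ℕ)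
    (x : Fin 2 → ℝ) : Fin 2 → ℝ :=
  ∫ t in Set.Ioi (0 : ℝ), (Real.exp (-κ * t) * lagPoly n (κ * t)) • u x t

open Finset

noncomputable def lagPolyDeriv (n : ℕ) (x : ℝ) : ℝ :=
  ∑ j ∈ range n, (-1 : ℝ) ^ (j + 1) * (n.choose (j + 1) : ℝ) * x ^ j / (j.factorial : ℝ)

lemma hasDerivAt_lagPoly_lagPolyDeriv (n : ℕ) (x : ℝ) :
    HasDerivAt (lagPoly n) (lagPolyDeriv n x) x := by
  have hterm : ∀ k : ℕ,
      HasDerivAt (fun y : ℝ => (-1 : ℝ) ^ k * (n.choose k : ℝ) * y ^ k / (k.factorial : ℝ))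
        ((-1 : ℝ) ^ k * (n.choose k : ℝ) * ((k : ℝ) * x ^ (k - 1)) / (k.factorial : ℝ)) x :=
    fun k => ((hasDerivAt_pow k x).const_mul _).div_const _
  refine (HasDerivAt.fun_sum fun k (_ : k ∈ range (n + 1)) => hterm k).congr_deriv ?_
  rw [sum_range_succ']
  simp only [Nat.cast_zero, zero_mul, mul_zero, zero_div, add_zero]
  refine sum_congr rfl fun j _ => ?_
  rw [Nat.factorial_succ, Nat.add_sub_cancel]
  push_cast
  field_simp

lemma lagPolyDeriv_succ (n : ℕ) (x : ℝ) :
    lagPolyDeriv (n + 1) x = lagPolyDeriv n x - lagPoly n x := by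
  have hpascal : ∀ j ∈ range n,
      (-1 : ℝ) ^ (j + 1) * ((n + 1).choose (j + 1) : ℝ) * x ^ j / (j.factorial : ℝ)
        = (-1 : ℝ) ^ (j + 1) * (n.choose (j + 1) : ℝ) * x ^ j / (j.factorial : ℝ)
          - (-1 : ℝ) ^ j * (n.choose j : ℝ) * x ^ j / (j.factorial : ℝ) := by
    intro j _
    rw [Nat.choose_succ_succ]
    push_cast
    ring
  rw [lagPolyDeriv, lagPolyDeriv, lagPoly, sum_range_succ, sum_range_succ,
    sum_congr rfl hpascal, sum_sub_distrib]
  simp only [Nat.choose_self, Nat.cast_one, mul_one]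
  ring

lemma lagPolyDeriv_eq_neg_sum (n : ℕ) (x : ℝ) :
    lagPolyDeriv n x = -∑ m ∈ range n, lagPoly m x := by
  induction n with
  | zero => simp [lagPolyDeriv]
  | succ n ih => rw [lagPolyDeriv_succ, ih, sum_range_succ]; ring

lemma hasDerivAt_lagPoly (n : ℕ) (x : ℝ) :
    HasDerivAt (lagPoly n) (-∑ m ∈ range n, lagPoly m x) x :=
  lagPolyDeriv_eq_neg_sum n x ▸ hasDerivAt_lagPoly_lagPolyDeriv n x

lemma sum_range_succ_sum_range_succ {M : Type*} [AddCommMonoid M] (w : ℕ → M) (n : ℕ) :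
    ∑ m ∈ range (n + 1), ∑ l ∈ range (m + 1), w l = ∑ l ∈ range (n + 1), (n - l + 1) • w l := by
  induction n with
  | zero => simp
  | succ n ih =>
    have hshift : ∀ l ∈ range (n + 1), (n + 1 - l + 1) • w l = (n - l + 1) • w l + w l := by
      intro l hl
      rw [Nat.succ_sub (Nat.lt_succ_iff.mp (mem_range.mp hl)), succ_nsmul]
    rw [sum_range_succ, ih, sum_range_succ (fun l => (n + 1 - l + 1) • w l),
      sum_congr rfl hshift, sum_add_distrib, sum_range_succ w (n + 1)]
    simp [add_assoc]

noncomputable def lagWeight (κ : ℝ) (n : ℕ) (t : ℝ) : ℝ := Real.exp (-κ * t) * lagPoly n (κ * t)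

lemma lagCoeff_eq_integral_lagWeight_smul (κ : ℝ) (u : (Fin 2 → ℝ) → ℝ → (Fin 2 → ℝ)) (n : ℕ)
    (x : Fin 2 → ℝ) : lagCoeff κ u n x = ∫ t in Set.Ioi 0, lagWeight κ n t • u x t := rfl

lemma hasDerivAt_lagWeight (κ : ℝ) (n : ℕ) (t : ℝ) :
    HasDerivAt (lagWeight κ n) (∑ m ∈ range (n + 1), -κ * lagWeight κ m t) t := by
  have hexp : HasDerivAt (fun s : ℝ => Real.exp (-κ * s)) (Real.exp (-κ * t) * -κ) t := by
    simpa using ((hasDerivAt_id t).const_mul (-κ)).exp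
  have hlag : HasDerivAt (fun s : ℝ => lagPoly n (κ * s))
      ((-∑ m ∈ range n, lagPoly m (κ * t)) * κ) t :=
    (hasDerivAt_lagPoly n (κ * t)).comp t (by simpa using (hasDerivAt_id t).const_mul κ)
  refine (hexp.mul hlag).congr_deriv ?_
  simp only [lagWeight, sum_range_succ, ← mul_sum]
  ring

lemma hasDerivAt_sum_neg_mul_lagWeight (κ : ℝ) (n : ℕ) (t : ℝ) :
    HasDerivAt (fun s => ∑ m ∈ range (n + 1), -κ * lagWeight κ m s)
      (∑ m ∈ range (n + 1), κ ^ 2 * ((n - m + 1 : ℕ) : ℝ) * lagWeight κ m t) t := by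
  refine (HasDerivAt.fun_sum fun m (_ : m ∈ range (n + 1)) =>
    (hasDerivAt_lagWeight κ m t).const_mul (-κ)).congr_deriv ?_
  simp only [← mul_sum, sum_range_succ_sum_range_succ, nsmul_eq_mul]
  push_cast
  simp only [mul_sum]
  exact sum_congr rfl fun m _ => by ring

/-- Integrability and decay against a fixed `v` pass from the generators `e^{-κt} tᵏ` to the
whole span, which contains `φₙ` and its derivatives. -/
def expPolyWeights (κ : ℝ) : Submodule ℝ (ℝ → ℝ) :=
  Submodule.span ℝ (Set.range fun (k : ℕ) (t : ℝ) => Real.exp (-κ * t) * t ^ k)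

lemma lagWeight_mem_expPolyWeights (κ : ℝ) (n : ℕ) : lagWeight κ n ∈ expPolyWeights κ := by
  have hexpand : lagWeight κ n = ∑ k ∈ range (n + 1),
      ((-1 : ℝ) ^ k * (n.choose k : ℝ) * κ ^ k / (k.factorial : ℝ)) •
        fun t => Real.exp (-κ * t) * t ^ k := by
    funext t
    simp only [lagWeight, lagPoly, mul_sum, Finset.sum_apply, Pi.smul_apply, smul_eq_mul]
    exact sum_congr rfl fun k _ => by ring
  rw [hexpand]
  exact Submodule.sum_mem _ fun k _ =>
    Submodule.smul_mem _ _ (Submodule.subset_span ⟨k, rfl⟩)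

lemma sum_mul_lagWeight_mem_expPolyWeights (κ : ℝ) (c : ℕ → ℝ) (s : Finset ℕ) :
    (fun t => ∑ m ∈ s, c m * lagWeight κ m t) ∈ expPolyWeights κ := by
  have hsum : (fun t => ∑ m ∈ s, c m * lagWeight κ m t) = ∑ m ∈ s, c m • lagWeight κ m := by
    funext t
    simp [Finset.sum_apply]
  rw [hsum]
  exact Submodule.sum_mem _ fun m _ => Submodule.smul_mem _ _ (lagWeight_mem_expPolyWeights κ m)

section WeightedFunctions

variable {E : Type*} [NormedAddCommGroup E] [NormedSpace ℝ E]

lemma integrableOn_smul_of_mem_expPolyWeights {κ : ℝ} {v : ℝ → E} {s : Set ℝ}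
    (hv : ∀ k : ℕ, IntegrableOn (fun t => (Real.exp (-κ * t) * t ^ k) • v t) s)
    {w : ℝ → ℝ} (hw : w ∈ expPolyWeights κ) : IntegrableOn (fun t => w t • v t) s := by
  induction hw using Submodule.span_induction with
  | mem w hw => obtain ⟨k, rfl⟩ := hw; exact hv k
  | zero => simp
  | add w w' _ _ hw hw' => exact (hw.add hw').congr (ae_of_all _ fun t => (add_smul ..).symm)
  | smul c w _ hw => exact (hw.smul c).congr (ae_of_all _ fun t => (mul_smul ..).symm)

lemma tendsto_smul_of_mem_expPolyWeights {κ : ℝ} {v : ℝ → E} {l : Filter ℝ}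
    (hv : ∀ k : ℕ, Tendsto (fun t => (Real.exp (-κ * t) * t ^ k) • v t) l (nhds 0))
    {w : ℝ → ℝ} (hw : w ∈ expPolyWeights κ) : Tendsto (fun t => w t • v t) l (nhds 0) := by
  induction hw using Submodule.span_induction with
  | mem w hw => obtain ⟨k, rfl⟩ := hw; exact hv k
  | zero => simpa using tendsto_const_nhds
  | add w w' _ _ hw hw' => simpa only [Pi.add_apply, add_smul, add_zero] using hw.add hw'
  | smul c w _ hw =>
    simpa only [Pi.smul_apply, smul_eq_mul, mul_smul, smul_zero] using hw.const_smul c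

lemma integral_Ioi_deriv_smul_eq_neg [CompleteSpace E] {f f' : ℝ → ℝ} {v v' : ℝ → E}
    (hf : ∀ t, HasDerivAt f (f' t) t)
    (hv : ∀ t ∈ Set.Ici (0 : ℝ), HasDerivWithinAt v (v' t) (Set.Ici 0) t) (hv0 : v 0 = 0)
    (hf'v : IntegrableOn (fun t => f' t • v t) (Set.Ioi 0))
    (hfv' : IntegrableOn (fun t => f t • v' t) (Set.Ioi 0))
    (hlim : Tendsto (fun t => f t • v t) atTop (nhds 0)) :
    ∫ t in Set.Ioi 0, f' t • v t = -∫ t in Set.Ioi 0, f t • v' t := by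
  have hderiv : ∀ t ∈ Set.Ioi (0 : ℝ),
      HasDerivAt (fun t => f t • v t) (f t • v' t + f' t • v t) t := fun t ht =>
    (hf t).smul ((hv t (Set.mem_Ici.mpr ht.le)).hasDerivAt (Ici_mem_nhds ht))
  have hcont : ContinuousWithinAt (fun t => f t • v t) (Set.Ici 0) 0 :=
    (hf 0).continuousAt.continuousWithinAt.smul (hv 0 Set.self_mem_Ici).continuousWithinAt
  have hftc := integral_Ioi_of_hasDerivAt_of_tendsto hcont hderiv (hfv'.add hf'v) hlim
  rw [hv0, smul_zero, sub_zero, integral_add hfv' hf'v] at hftc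
  exact eq_neg_of_add_eq_zero_right hftc

lemma integral_sum_mul_smul {μ : Measure ℝ} {w : ℕ → ℝ → ℝ} {v : ℝ → E} (c : ℕ → ℝ)
    {s : Finset ℕ} (hw : ∀ m ∈ s, Integrable (fun t => w m t • v t) μ) :
    ∫ t, (∑ m ∈ s, c m * w m t) • v t ∂μ = ∑ m ∈ s, c m • ∫ t, w m t • v t ∂μ := by
  simp only [sum_smul, mul_smul]
  rw [integral_finsetSum (f := fun m t => c m • w m t • v t) s
    fun m hm => (hw m hm).smul (c m)]
  simp only [integral_smul]

end WeightedFunctions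

theorem lame_laguerre_coefficients_general (κ cs cp : ℝ)
    (D : Set (Fin 2 → ℝ))
    (u ut utt : (Fin 2 → ℝ) → ℝ → (Fin 2 → ℝ))
    -- (i) regularity in time, with homogeneous initial conditions
    (hut : ∀ x ∈ D, ∀ t ∈ Set.Ici (0 : ℝ),
      HasDerivWithinAt (fun τ => u x τ) (ut x t) (Set.Ici 0) t)
    (hutt : ∀ x ∈ D, ∀ t ∈ Set.Ici (0 : ℝ),
      HasDerivWithinAt (fun τ => ut x τ) (utt x t) (Set.Ici 0) t)
    (hu0 : ∀ x ∈ D, u x 0 = 0) (hut0 : ∀ x ∈ D, ut x 0 = 0)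
    -- (ii) integrability and decay of e^{−κt} t^k ∂_t^j u
    (hint : ∀ x ∈ D, ∀ k : ℕ,
      IntegrableOn (fun t => (Real.exp (-κ * t) * t ^ k) • u x t) (Set.Ioi 0))
    (hint' : ∀ x ∈ D, ∀ k : ℕ,
      IntegrableOn (fun t => (Real.exp (-κ * t) * t ^ k) • ut x t) (Set.Ioi 0))
    (hint'' : ∀ x ∈ D, ∀ k : ℕ,
      IntegrableOn (fun t => (Real.exp (-κ * t) * t ^ k) • utt x t) (Set.Ioi 0))
    (hlim : ∀ x ∈ D, ∀ k : ℕ,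
      Tendsto (fun t => (Real.exp (-κ * t) * t ^ k) • u x t) atTop (nhds 0))
    (hlim' : ∀ x ∈ D, ∀ k : ℕ,
      Tendsto (fun t => (Real.exp (-κ * t) * t ^ k) • ut x t) atTop (nhds 0))
    -- (iii) spatial regularity and the elastodynamic equation
    (hwave : ∀ x ∈ D, ∀ t > (0 : ℝ), utt x t = lame cs cp (fun y => u y t) x)
    -- (iv) regularity of the coefficients and commutation of Δ* with the transform
    (hcomm : ∀ n : ℕ, ∀ x ∈ D,
      lame cs cp (lagCoeff κ u n) x
        = ∫ t in Set.Ioi (0 : ℝ),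
            (Real.exp (-κ * t) * lagPoly n (κ * t)) • lame cs cp (fun y => u y t) x) :
    ∀ n : ℕ, ∀ x ∈ D,
      lame cs cp (lagCoeff κ u n) x - κ ^ 2 • lagCoeff κ u n x
        = ∑ m ∈ Finset.range n, (κ ^ 2 * ((n - m + 1 : ℕ) : ℝ)) • lagCoeff κ u m x := by
  intro n x hx
  have hφ := lagWeight_mem_expPolyWeights κ n
  have hφ' := sum_mul_lagWeight_mem_expPolyWeights κ (fun _ => -κ) (range (n + 1))
  have hφ'' := sum_mul_lagWeight_mem_expPolyWeights κ
    (fun m => κ ^ 2 * ((n - m + 1 : ℕ) : ℝ)) (range (n + 1))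
  have hlame : lame cs cp (lagCoeff κ u n) x
      = ∫ t in Set.Ioi 0, (∑ m ∈ range (n + 1), κ ^ 2 * ((n - m + 1 : ℕ) : ℝ)
          * lagWeight κ m t) • u x t := calc
    lame cs cp (lagCoeff κ u n) x = ∫ t in Set.Ioi 0, lagWeight κ n t • utt x t :=
      (hcomm n x hx).trans <| setIntegral_congr_fun measurableSet_Ioi fun t ht => by
        rw [hwave x hx t ht, lagWeight]
    _ = -∫ t in Set.Ioi 0, (∑ m ∈ range (n + 1), -κ * lagWeight κ m t) • ut x t := by
      rw [integral_Ioi_deriv_smul_eq_neg (hasDerivAt_lagWeight κ n) (hutt x hx) (hut0 x hx)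
        (integrableOn_smul_of_mem_expPolyWeights (hint' x hx) hφ')
        (integrableOn_smul_of_mem_expPolyWeights (hint'' x hx) hφ)
        (tendsto_smul_of_mem_expPolyWeights (hlim' x hx) hφ), neg_neg]
    _ = _ := by
      rw [integral_Ioi_deriv_smul_eq_neg (hasDerivAt_sum_neg_mul_lagWeight κ n) (hut x hx)
        (hu0 x hx) (integrableOn_smul_of_mem_expPolyWeights (hint x hx) hφ'')
        (integrableOn_smul_of_mem_expPolyWeights (hint' x hx) hφ')
        (tendsto_smul_of_mem_expPolyWeights (hlim x hx) hφ')]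
  rw [hlame, integral_sum_mul_smul _ fun m _ =>
      integrableOn_smul_of_mem_expPolyWeights (hint x hx) (lagWeight_mem_expPolyWeights κ m),
    sum_range_succ, Nat.sub_self, zero_add, Nat.cast_one, mul_one]
  simp only [← lagCoeff_eq_integral_lagWeight_smul, add_sub_cancel_right]

/-- The Fourier–Laguerre coefficients of a causal solution of the elastodynamic equation
∂_t² u = Δ* u satisfy Δ* u_n − κ² u_n = ∑_{m=0}^{n−1} κ²(n−m+1) u_m. -/
theorem lame_laguerre_coefficients (κ cs cp : ℝ) (hκ : 0 < κ) (hcs : 0 < cs) (hcp : 0 < cp)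
    (D : Set (Fin 2 → ℝ)) (hD : IsOpen D)
    (u ut utt : (Fin 2 → ℝ) → ℝ → (Fin 2 → ℝ))
    -- (i) regularity in time, with homogeneous initial conditions
    (hut : ∀ x ∈ D, ∀ t ∈ Set.Ici (0 : ℝ),
      HasDerivWithinAt (fun τ => u x τ) (ut x t) (Set.Ici 0) t)
    (hutt : ∀ x ∈ D, ∀ t ∈ Set.Ici (0 : ℝ),
      HasDerivWithinAt (fun τ => ut x τ) (utt x t) (Set.Ici 0) t)
    (hcontt : ∀ x ∈ D, ContinuousOn (fun τ => utt x τ) (Set.Ici 0))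
    (hu0 : ∀ x ∈ D, u x 0 = 0) (hut0 : ∀ x ∈ D, ut x 0 = 0)
    -- (ii) integrability and decay of e^{−κt} t^k ∂_t^j u
    (hint : ∀ x ∈ D, ∀ k : ℕ,
      IntegrableOn (fun t => (Real.exp (-κ * t) * t ^ k) • u x t) (Set.Ioi 0))
    (hint' : ∀ x ∈ D, ∀ k : ℕ,
      IntegrableOn (fun t => (Real.exp (-κ * t) * t ^ k) • ut x t) (Set.Ioi 0))
    (hint'' : ∀ x ∈ D, ∀ k : ℕ,
      IntegrableOn (fun t => (Real.exp (-κ * t) * t ^ k) • utt x t) (Set.Ioi 0))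
    (hlim : ∀ x ∈ D, ∀ k : ℕ,
      Tendsto (fun t => (Real.exp (-κ * t) * t ^ k) • u x t) atTop (nhds 0))
    (hlim' : ∀ x ∈ D, ∀ k : ℕ,
      Tendsto (fun t => (Real.exp (-κ * t) * t ^ k) • ut x t) atTop (nhds 0))
    -- (iii) spatial regularity and the elastodynamic equation
    (hC2 : ∀ t > (0 : ℝ), ContDiffOn ℝ 2 (fun y => u y t) D)
    (hwave : ∀ x ∈ D, ∀ t > (0 : ℝ), utt x t = lame cs cp (fun y => u y t) x)
    -- (iv) regularity of the coefficients and commutation of Δ* with the transform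
    (hC2n : ∀ n : ℕ, ContDiffOn ℝ 2 (lagCoeff κ u n) D)
    (hcomm : ∀ n : ℕ, ∀ x ∈ D,
      lame cs cp (lagCoeff κ u n) x
        = ∫ t in Set.Ioi (0 : ℝ),
            (Real.exp (-κ * t) * lagPoly n (κ * t)) • lame cs cp (fun y => u y t) x) :
    ∀ n : ℕ, ∀ x ∈ D,
      lame cs cp (lagCoeff κ u n) x - κ ^ 2 • lagCoeff κ u n x
        = ∑ m ∈ Finset.range n, (κ ^ 2 * ((n - m + 1 : ℕ) : ℝ)) • lagCoeff κ u m x :=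
  lame_laguerre_coefficients_general κ cs cp D u ut utt hut hutt hu0 hut0 hint hint' hint'' hlim
    hlim' hwave hcomm
end

section
/- Let κ, c_s, c_p > 0 and n ∈ ℕ. Then there exist ε > 0 and M > 0 such that for all 0 < r < ε, |η_{1,n}(r) − (−1/(2c_p²) − 1/(2c_s²))| ≤ M r²; in particular η_{1,n}(r) → −1/(2c_p²) − 1/(2c_s²) as r → 0⁺. -/
open Real Filter MeasureTheory

noncomputable def acoef (γ : ℝ) : ℕ → ℕ → ℝ
  | n, m =>
    if m = 0 then 1
    else if n < m then 0
    else if m = n then -(γ / (n : ℝ)) * acoef γ (n - 1) (n - 1)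
    else (1 / (2 * γ * (m : ℝ))) *
      (4 * (((m + 1) / 2 : ℕ) : ℝ) ^ 2 * acoef γ n (m + 1)
        - γ ^ 2 * ∑ k ∈ (Finset.Icc (m - 1) (n - 1)).attach,
            ((n - (k : ℕ) + 1 : ℕ) : ℝ) * acoef γ (k : ℕ) (m - 1))
  termination_by n m => (n, n - m)
  decreasing_by
  · apply Prod.Lex.left; omega
  · apply Prod.Lex.right; omega
  · apply Prod.Lex.left
    have hk := k.2
    simp only [Finset.mem_Icc] at hk
    omega

/-- χ_{k,n} -/
noncomputable def chiC (n : ℕ) (k : ℤ) : ℝ :=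
  if k = -2 then (n : ℝ) * ((n : ℝ) - 1)
  else if k = -1 then -4 * (n : ℝ) ^ 2
  else if k = 0 then 2 * (3 * (n : ℝ) ^ 2 + 3 * (n : ℝ) + 1)
  else if k = 1 then -4 * ((n : ℝ) + 1) ^ 2
  else if k = 2 then ((n : ℝ) + 1) * ((n : ℝ) + 2)
  else 0

/-- the sum ∑_{k=-2}^{2} χ_{k,n} f(n+k), terms with n+k<0 omitted -/
noncomputable def sumChi (n : ℕ) (f : ℕ → ℝ) : ℝ :=
  ∑ k ∈ Finset.Icc (-2 : ℤ) 2,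
    if 0 ≤ (n : ℤ) + k then chiC n k * f ((n : ℤ) + k).toNat else 0

noncomputable def besselI0 (z : ℝ) : ℝ := ∑' k : ℕ, (z / 2) ^ (2 * k) / (k.factorial : ℝ) ^ 2

noncomputable def besselI1 (z : ℝ) : ℝ :=
  ∑' k : ℕ, (z / 2) ^ (2 * k + 1) / ((k.factorial : ℝ) * ((k + 1).factorial : ℝ))

noncomputable def psiH (k : ℕ) : ℝ := ∑ j ∈ Finset.range k, (1 : ℝ) / ((j : ℝ) + 1)

noncomputable def besselS0 (z : ℝ) : ℝ :=
  ∑' k : ℕ, psiH k * (z / 2) ^ (2 * k) / (k.factorial : ℝ) ^ 2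

noncomputable def besselS1 (z : ℝ) : ℝ :=
  -(1 / 2) * ∑' k : ℕ, (psiH (k + 1) + psiH k) * (z / 2) ^ (2 * k + 1) /
    ((k.factorial : ℝ) * ((k + 1).factorial : ℝ))

noncomputable def vPol (γ : ℝ) (n : ℕ) (r : ℝ) : ℝ :=
  ∑ m ∈ Finset.range (n / 2 + 1), acoef γ n (2 * m) * r ^ (2 * m)

noncomputable def wPol (γ : ℝ) (n : ℕ) (r : ℝ) : ℝ :=
  ∑ m ∈ Finset.range ((n - 1) / 2 + 1), acoef γ n (2 * m + 1) * r ^ (2 * m + 1)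

noncomputable def vTil (γ : ℝ) (n : ℕ) (r : ℝ) : ℝ :=
  2 * ∑ m ∈ Finset.Icc 1 (n / 2), (m : ℝ) * acoef γ n (2 * m) * r ^ (2 * m)
    - γ * ∑ m ∈ Finset.range ((n - 1) / 2 + 1), acoef γ n (2 * m + 1) * r ^ (2 * m + 2)

noncomputable def wTil (γ : ℝ) (n : ℕ) (r : ℝ) : ℝ :=
  2 * ∑ m ∈ Finset.Icc 1 ((n - 1) / 2), (m : ℝ) * acoef γ n (2 * m + 1) * r ^ (2 * m + 1)
    - γ * ∑ m ∈ Finset.range (n / 2 + 1), acoef γ n (2 * m) * r ^ (2 * m + 1)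

noncomputable def phiF (γ : ℝ) (n : ℕ) (r : ℝ) : ℝ :=
  -besselI0 (γ * r) * vPol γ n r + besselI1 (γ * r) * wPol γ n r

noncomputable def phiHat (γ : ℝ) (n : ℕ) (r : ℝ) : ℝ :=
  (-(Real.eulerMascheroniConstant + Real.log (γ / 2)) * besselI0 (γ * r) + besselS0 (γ * r)) * vPol γ n r
    + (1 / (γ * r) + (Real.eulerMascheroniConstant + Real.log (γ / 2)) * besselI1 (γ * r)
        + besselS1 (γ * r)) * wPol γ n r

noncomputable def phiTil (γ : ℝ) (n : ℕ) (r : ℝ) : ℝ :=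
  -besselI0 (γ * r) * vTil γ n r + besselI1 (γ * r) * wTil γ n r

noncomputable def phiHatTil (γ : ℝ) (n : ℕ) (r : ℝ) : ℝ :=
  (-(Real.eulerMascheroniConstant + Real.log (γ / 2)) * besselI0 (γ * r) + besselS0 (γ * r)) * vTil γ n r
    + (1 / (γ * r) + (Real.eulerMascheroniConstant + Real.log (γ / 2)) * besselI1 (γ * r)
        + besselS1 (γ * r)) * wTil γ n r

noncomputable def etaF (κ cs cp : ℝ) (ℓ n : ℕ) (r : ℝ) : ℝ :=
  (-(ℓ : ℝ)) ^ (ℓ - 1) / (κ ^ 2 * r ^ 2) *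
      sumChi n (fun j => phiF (κ / cs) j r - phiF (κ / cp) j r)
    + (-1 : ℝ) ^ (ℓ - 1) / cp ^ 2 * phiF (κ / cp) n r
    + ((ℓ : ℝ) - 1) / cs ^ 2 * phiF (κ / cs) n r

noncomputable def xiF (κ cs cp : ℝ) (ℓ n : ℕ) (r : ℝ) : ℝ :=
  (-(ℓ : ℝ)) ^ (ℓ - 1) / (κ ^ 2 * r ^ 2) *
      sumChi n (fun j => phiHat (κ / cs) j r - phiHat (κ / cp) j r)
    + (-1 : ℝ) ^ (ℓ - 1) / cp ^ 2 * phiHat (κ / cp) n r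
    + ((ℓ : ℝ) - 1) / cs ^ 2 * phiHat (κ / cs) n r

noncomputable def etaTil (κ cs cp : ℝ) (ℓ n : ℕ) (r : ℝ) : ℝ :=
  (-(ℓ : ℝ)) ^ (ℓ - 1) / (κ ^ 2 * r ^ 2) *
      sumChi n (fun j => phiTil (κ / cs) j r - 2 * phiF (κ / cs) j r
        + 2 * phiF (κ / cp) j r - phiTil (κ / cp) j r)
    + (-1 : ℝ) ^ (ℓ - 1) / cp ^ 2 * phiTil (κ / cp) n r
    + ((ℓ : ℝ) - 1) / cs ^ 2 * phiTil (κ / cs) n r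

noncomputable def xiTil (κ cs cp : ℝ) (ℓ n : ℕ) (r : ℝ) : ℝ :=
  (-(ℓ : ℝ)) ^ (ℓ - 1) / (κ ^ 2 * r ^ 2) *
      sumChi n (fun j => phiHatTil (κ / cs) j r - 2 * phiHat (κ / cs) j r
        + 2 * phiHat (κ / cp) j r - phiHatTil (κ / cp) j r)
    + (-1 : ℝ) ^ (ℓ - 1) / cp ^ 2 * phiHatTil (κ / cp) n r
    + ((ℓ : ℝ) - 1) / cs ^ 2 * phiHatTil (κ / cs) n r


/-!
The Bessel series give I₀(z) = 1 + z²/4 + O(z⁴) and I₁(z) = z/2 + O(z³), and the recursion at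
m = 1 gives γ a_{n,1}/2 − a_{n,2} = −γ² n(n+3)/8; together
φ_n(γ, r) = −1 + A_n(γ) r² + O(r⁴) with A_n(γ) = −γ² (n+1)(n+2)/8 (`phiQuadCoeff`).
The constants cancel in φ(γ_s) − φ(γ_p), and ∑_k χ_{k,n} (n+k+1)(n+k+2) = 4, so the χ-sum is
(γ_p² − γ_s²) r²/2 + O(r⁴). Divided by κ² r² this tends to 1/(2c_p²) − 1/(2c_s²), while
φ_n(γ_p, r)/c_p² = −1/c_p² + O(r²).
-/

open Asymptotics Topology

theorem isBigO_pow_pow_of_le {m n : ℕ} (h : m ≤ n) :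
    (fun x : ℝ => x ^ n) =O[𝓝 0] (fun x => x ^ m) := by
  rcases h.eq_or_lt with rfl | h
  · exact isBigO_refl _ _
  · exact (isLittleO_pow_pow h).isBigO

theorem isBigO_tsum_sub_sum_range {c : ℕ → ℝ} (hc : ∀ k, |c k| ≤ 1) (N : ℕ) :
    (fun x : ℝ => ∑' k, c k * x ^ k - ∑ k ∈ Finset.range N, c k * x ^ k) =O[𝓝 0]
      (fun x => x ^ N) := by
  refine IsBigO.of_bound 2 ?_
  filter_upwards [Icc_mem_nhds (show (-(1 / 2) : ℝ) < 0 by norm_num)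
    (show (0 : ℝ) < 1 / 2 by norm_num)] with x hmem
  have hx₂ : |x| ≤ 1 / 2 := abs_le.2 hmem
  have hx : |x| < 1 := hx₂.trans_lt (by norm_num)
  have hgeom : HasSum (fun k => |x| ^ k) (1 - |x|)⁻¹ := hasSum_geometric_of_lt_one (abs_nonneg x) hx
  have hterm : ∀ k, ‖c k * x ^ k‖ ≤ |x| ^ k := fun k => by
    rw [norm_mul, norm_pow, Real.norm_eq_abs]
    exact mul_le_of_le_one_left (by positivity) (hc k)
  have hsum : Summable (fun k => c k * x ^ k) := .of_norm_bounded hgeom.summable hterm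
  rw [← hsum.sum_add_tsum_nat_add N, add_sub_cancel_left]
  calc ‖∑' k, c (k + N) * x ^ (k + N)‖ ≤ |x| ^ N * (1 - |x|)⁻¹ :=
        tsum_of_norm_bounded (hgeom.mul_left _) fun k =>
          (hterm _).trans_eq (by rw [pow_add, mul_comm])
    _ ≤ 2 * ‖x ^ N‖ := by
        rw [norm_pow, Real.norm_eq_abs, mul_comm]
        gcongr
        rw [inv_le_comm₀ (by linarith) two_pos]
        linarith

theorem besselI0_eq_tsum (z : ℝ) :
    besselI0 z = ∑' k : ℕ, 1 / (k.factorial : ℝ) ^ 2 * ((z / 2) ^ 2) ^ k := by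
  unfold besselI0
  exact tsum_congr fun k => by rw [← pow_mul]; ring

theorem besselI1_eq_mul_tsum (z : ℝ) :
    besselI1 z = z / 2 *
      ∑' k : ℕ, 1 / ((k.factorial : ℝ) * ((k + 1).factorial : ℝ)) * ((z / 2) ^ 2) ^ k := by
  unfold besselI1
  rw [← tsum_mul_left]
  exact tsum_congr fun k => by rw [← pow_mul, pow_succ]; ring

theorem tendsto_sq_half_mul_nhds_zero (γ : ℝ) :
    Tendsto (fun r : ℝ => (γ * r / 2) ^ 2) (𝓝 0) (𝓝 0) :=
  Continuous.tendsto' (by fun_prop) 0 0 (by simp)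

theorem isBigO_besselI0_mul_sub (γ : ℝ) :
    (fun r : ℝ => besselI0 (γ * r) - (1 + (γ * r) ^ 2 / 4)) =O[𝓝 0] (fun r => r ^ 4) := by
  have hc : ∀ k : ℕ, |1 / (k.factorial : ℝ) ^ 2| ≤ 1 := fun k => by
    rw [abs_of_nonneg (by positivity)]
    exact div_le_one_of_le₀ (one_le_pow₀ (by exact_mod_cast k.factorial_pos)) (by positivity)
  have h := (isBigO_tsum_sub_sum_range hc 2).comp_tendsto (tendsto_sq_half_mul_nhds_zero γ)
  have hpow : (fun r : ℝ => ((γ * r / 2) ^ 2) ^ 2) =O[𝓝 0] fun r => r ^ 4 :=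
    ((isBigO_refl _ _).const_mul_left ((γ / 2) ^ 4)).congr_left fun r => by ring
  refine (h.congr_left fun r => ?_).trans hpow
  simp only [Function.comp_apply, besselI0_eq_tsum, Finset.sum_range_succ, Finset.range_one,
    Finset.sum_singleton, Nat.factorial_zero, Nat.factorial_one]
  ring

theorem isBigO_besselI1_mul_sub (γ : ℝ) :
    (fun r : ℝ => besselI1 (γ * r) - γ * r / 2) =O[𝓝 0] (fun r => r ^ 3) := by
  have hc : ∀ k : ℕ, |1 / ((k.factorial : ℝ) * ((k + 1).factorial : ℝ))| ≤ 1 := fun k => by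
    rw [abs_of_nonneg (by positivity)]
    exact div_le_one_of_le₀ (one_le_mul_of_one_le_of_one_le
      (by exact_mod_cast k.factorial_pos) (by exact_mod_cast (k + 1).factorial_pos)) (by positivity)
  have h := (isBigO_tsum_sub_sum_range hc 1).comp_tendsto (tendsto_sq_half_mul_nhds_zero γ)
  have hlin : (fun r : ℝ => γ * r / 2) =O[𝓝 0] fun r => r ^ 1 :=
    ((isBigO_refl _ _).const_mul_left (γ / 2)).congr_left fun r => by ring
  have hpow : (fun r : ℝ => r ^ 1 * ((γ * r / 2) ^ 2) ^ 1) =O[𝓝 0] fun r => r ^ 3 :=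
    ((isBigO_refl _ _).const_mul_left ((γ / 2) ^ 2)).congr_left fun r => by ring
  refine ((hlin.mul h).trans hpow).congr_left fun r => ?_
  simp only [Function.comp_apply, besselI1_eq_mul_tsum, Finset.range_one, Finset.sum_singleton,
    Nat.factorial_zero]
  ring

theorem Asymptotics.IsBigO.mul_pow_of_le {u v : ℝ → ℝ} {i j N : ℕ} (hu : u =O[𝓝 0] (· ^ i))
    (hv : v =O[𝓝 0] (· ^ j)) (h : N ≤ i + j) : (fun r => u r * v r) =O[𝓝 0] (· ^ N) :=
  (hu.mul hv).trans ((isBigO_pow_pow_of_le h).congr_left fun r => pow_add r i j)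

theorem isBigO_mul_sub_mul {f g p q : ℝ → ℝ} {a b c d N : ℕ}
    (hf : (fun r => f r - p r) =O[𝓝 0] (· ^ a)) (hg : (fun r => g r - q r) =O[𝓝 0] (· ^ b))
    (hp : p =O[𝓝 0] (· ^ c)) (hq : q =O[𝓝 0] (· ^ d))
    (hab : N ≤ a + b) (had : N ≤ a + d) (hcb : N ≤ c + b) :
    (fun r => f r * g r - p r * q r) =O[𝓝 0] (· ^ N) :=
  (((hf.mul_pow_of_le hg hab).add (hf.mul_pow_of_le hq had)).add
    (hp.mul_pow_of_le hg hcb)).congr_left fun r => by ring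

theorem ContinuousAt.isBigO_pow_zero {f : ℝ → ℝ} (hf : ContinuousAt f 0) :
    f =O[𝓝 0] (· ^ 0) :=
  (hf.tendsto.isBigO_one ℝ).congr_right fun r => (pow_zero r).symm

theorem isBigO_sum_mul_pow {ι : Type*} (s : Finset ι) (c : ι → ℝ) {e : ι → ℕ} {N : ℕ}
    (h : ∀ i ∈ s, N ≤ e i) : (fun r : ℝ => ∑ i ∈ s, c i * r ^ e i) =O[𝓝 0] (· ^ N) :=
  IsBigO.fun_sum fun i hi => (isBigO_pow_pow_of_le (h i hi)).const_mul_left (c i)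

theorem acoef_zero (γ : ℝ) (n : ℕ) : acoef γ n 0 = 1 := by
  rw [acoef]; simp

theorem acoef_of_lt (γ : ℝ) {n m : ℕ} (hm : m ≠ 0) (h : n < m) : acoef γ n m = 0 := by
  rw [acoef]; simp [hm, h]

theorem isBigO_vPol_sub (γ : ℝ) (n : ℕ) :
    (fun r => vPol γ n r - (1 + acoef γ n 2 * r ^ 2)) =O[𝓝 0] (· ^ 4) := by
  have hext : ∀ r,
      vPol γ n r = ∑ m ∈ Finset.range (n / 2 + 1 + 1 + 1), acoef γ n (2 * m) * r ^ (2 * m) :=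
    fun r => Finset.sum_subset (Finset.range_subset_range.2 (by omega)) fun m hm hnm => by
      simp only [Finset.mem_range] at hm hnm
      rw [acoef_of_lt γ (by omega) (by omega), zero_mul]
  refine (isBigO_sum_mul_pow (Finset.range (n / 2 + 1)) (fun m => acoef γ n (2 * m + 4))
    (e := fun m => 2 * m + 4) fun m _ => by omega).congr_left fun r => ?_
  rw [hext, Finset.sum_range_succ' _ (n / 2 + 1 + 1), Finset.sum_range_succ' _ (n / 2 + 1)]
  simp only [mul_add, mul_zero, acoef_zero, pow_zero]
  ring

theorem isBigO_wPol_sub (γ : ℝ) (n : ℕ) :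
    (fun r => wPol γ n r - acoef γ n 1 * r) =O[𝓝 0] (· ^ 3) := by
  refine (isBigO_sum_mul_pow (Finset.range ((n - 1) / 2)) (fun m => acoef γ n (2 * m + 3))
    (e := fun m => 2 * m + 3) fun m _ => by omega).congr_left fun r => ?_
  rw [wPol, Finset.sum_range_succ']
  simp [mul_add]

theorem sum_range_sub_add_one (n : ℕ) :
    ∑ k ∈ Finset.range n, ((n - k + 1 : ℕ) : ℝ) = n * (n + 3) / 2 := by
  induction n with
  | zero => simp
  | succ n ih =>
    rw [Finset.sum_range_succ']
    simp only [Nat.add_sub_add_right, ih]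
    push_cast
    ring

theorem half_mul_acoef_one_sub_acoef_two (γ : ℝ) (hγ : γ ≠ 0) (n : ℕ) :
    γ * acoef γ n 1 / 2 - acoef γ n 2 = -γ ^ 2 * (n * (n + 3)) / 8 := by
  match n with
  | 0 => simp [acoef_of_lt]
  | 1 =>
    rw [acoef_of_lt γ two_ne_zero one_lt_two, acoef, if_neg one_ne_zero, if_neg (lt_irrefl 1),
      if_pos rfl, acoef_zero]
    field_simp
    ring
  | n + 2 =>
    have h : acoef γ (n + 2) 1 = 1 / (2 * γ) * (4 * acoef γ (n + 2) 2 -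
        γ ^ 2 * ∑ k ∈ Finset.range (n + 1 + 1), ((n + 2 - k + 1 : ℕ) : ℝ)) := by
      rw [acoef, if_neg one_ne_zero, if_neg (by omega), if_neg (by omega),
        Finset.sum_attach (Finset.Icc _ _) fun k => ((n + 2 - k + 1 : ℕ) : ℝ) * acoef γ k 0]
      simp only [acoef_zero, mul_one, Nat.add_one_sub_one, one_div]
      rw [← Finset.Ico_add_one_right_eq_Icc, ← Finset.range_eq_Ico]
      norm_num
    rw [h, sum_range_sub_add_one]
    push_cast
    field_simp
    ring

noncomputable def phiQuadCoeff (γ : ℝ) (n : ℕ) : ℝ := -γ ^ 2 * ((n + 1) * (n + 2)) / 8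

theorem isBigO_phiF_sub (γ : ℝ) (hγ : γ ≠ 0) (n : ℕ) :
    (fun r => phiF γ n r - (-1 + phiQuadCoeff γ n * r ^ 2)) =O[𝓝 0] (· ^ 4) := by
  have heven := isBigO_mul_sub_mul (isBigO_besselI0_mul_sub γ) (isBigO_vPol_sub γ n)
    (ContinuousAt.isBigO_pow_zero (by fun_prop)) (ContinuousAt.isBigO_pow_zero (by fun_prop))
    (N := 4) (by norm_num) le_rfl le_rfl
  have hhalf : (fun r : ℝ => γ * r / 2) =O[𝓝 0] (· ^ 1) :=
    ((isBigO_refl _ _).const_mul_left (γ / 2)).congr_left fun r => by ring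
  have hlin : (fun r : ℝ => acoef γ n 1 * r) =O[𝓝 0] (· ^ 1) :=
    ((isBigO_refl _ _).const_mul_left (acoef γ n 1)).congr_left fun r => by ring
  have hodd := isBigO_mul_sub_mul (isBigO_besselI1_mul_sub γ) (isBigO_wPol_sub γ n) hhalf hlin
    (N := 4) (by norm_num) le_rfl le_rfl
  have hquartic := (isBigO_refl (· ^ 4) (𝓝 (0 : ℝ))).const_mul_left (-(γ ^ 2 * acoef γ n 2 / 4))
  refine ((heven.neg_left.add hodd).add hquartic).congr_left fun r => ?_
  simp only [phiF, phiQuadCoeff]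
  linear_combination -r ^ 2 * half_mul_acoef_one_sub_acoef_two γ hγ n

theorem sumChi_eq (n : ℕ) (f : ℕ → ℝ) :
    sumChi n f = n * (n - 1) * f (n - 2) - 4 * n ^ 2 * f (n - 1)
      + 2 * (3 * n ^ 2 + 3 * n + 1) * f n - 4 * (n + 1) ^ 2 * f (n + 1)
      + (n + 1) * (n + 2) * f (n + 2) := by
  rw [sumChi, show Finset.Icc (-2 : ℤ) 2 = {-2, -1, 0, 1, 2} by decide]
  -- For n < 2 the terms dropped from `sumChi` (those with n + k < 0) are exactly the ones whose
  -- coefficient vanishes, so the truncated subtractions n - 1 and n - 2 do no harm.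
  rcases n with _ | _ | n
  · simp [chiC]
    ring
  · simp [chiC]
    ring
  · have h₀ : ((n : ℤ) + 1 + 1 + -2).toNat = n := by omega
    have h₂ : ((n : ℤ) + 1 + 1).toNat = n + 2 := by omega
    have h₃ : ((n : ℤ) + 1 + 1 + 1).toNat = n + 3 := by omega
    have h₄ : ((n : ℤ) + 1 + 1 + 2).toNat = n + 4 := by omega
    simp [chiC, h₀, h₂, h₃, h₄, show (2 : ℤ) ≤ n + 1 + 1 by omega,
      show (0 : ℤ) ≤ n + 1 by omega, show (0 : ℤ) ≤ n + 1 + 1 by omega,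
      show (0 : ℤ) ≤ n + 1 + 1 + 1 by omega, show (0 : ℤ) ≤ n + 1 + 1 + 2 by omega]
    ring

theorem sumChi_quadratic (n : ℕ) : sumChi n (fun j => ((j : ℝ) + 1) * (j + 2)) = 4 := by
  rw [sumChi_eq]
  rcases n with _ | _ | n
  · norm_num
  · norm_num
  · push_cast
    ring

theorem isBigO_sumChi {α : Type*} {l : Filter α} {F : ℕ → α → ℝ} {g : α → ℝ} (n : ℕ)
    (h : ∀ j, F j =O[l] g) : (fun x => sumChi n (F · x)) =O[l] g := by
  simp only [sumChi_eq]
  exact (((((h _).const_mul_left _).sub ((h _).const_mul_left _)).add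
    ((h _).const_mul_left _)).sub ((h _).const_mul_left _)).add ((h _).const_mul_left _)

theorem sumChi_phiQuadCoeff_sub (γs γp : ℝ) (n : ℕ) :
    sumChi n (fun j => phiQuadCoeff γs j - phiQuadCoeff γp j) = (γp ^ 2 - γs ^ 2) / 2 := by
  have h : sumChi n (fun j => phiQuadCoeff γs j - phiQuadCoeff γp j) =
      (γp ^ 2 - γs ^ 2) / 8 * sumChi n (fun j => ((j : ℝ) + 1) * (j + 2)) := by
    simp only [sumChi_eq, phiQuadCoeff]
    ring
  rw [h, sumChi_quadratic]
  ring

theorem isBigO_sumChi_phiF_sub (γs γp : ℝ) (hs : γs ≠ 0) (hp : γp ≠ 0) (n : ℕ) :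
    (fun r => sumChi n (fun j => phiF γs j r - phiF γp j r) - (γp ^ 2 - γs ^ 2) / 2 * r ^ 2)
      =O[𝓝 0] (· ^ 4) := by
  refine (isBigO_sumChi n fun j => (isBigO_phiF_sub γs hs j).sub (isBigO_phiF_sub γp hp j))
    |>.congr_left fun r => ?_
  rw [← sumChi_phiQuadCoeff_sub γs γp n]
  simp only [sumChi_eq]
  ring

theorem isBigO_etaF_one_sub (κ cs cp : ℝ) (hκ : κ ≠ 0) (hcs : cs ≠ 0) (hcp : cp ≠ 0) (n : ℕ) :
    (fun r => etaF κ cs cp 1 n r - (-(1 / (2 * cp ^ 2)) - 1 / (2 * cs ^ 2)))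
      =O[𝓝[>] 0] (· ^ 2) := by
  have hS := isBigO_sumChi_phiF_sub (κ / cs) (κ / cp) (div_ne_zero hκ hcs) (div_ne_zero hκ hcp) n
  have hφ := isBigO_phiF_sub (κ / cp) (div_ne_zero hκ hcp) n
  have hscale : (fun r : ℝ => r ^ 4 * (κ ^ 2 * r ^ 2)⁻¹) =O[𝓝 0] (· ^ 2) :=
    ((isBigO_refl _ _).const_mul_left (κ ^ 2)⁻¹).congr_left fun r => by
      rcases eq_or_ne r 0 with rfl | hr
      · simp
      · field_simp
  have hsum := (hS.mul (isBigO_refl (fun r : ℝ => (κ ^ 2 * r ^ 2)⁻¹) _)).trans hscale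
  have hself := (hφ.trans (isBigO_pow_pow_of_le (by norm_num : 2 ≤ 4))).const_mul_left (cp ^ 2)⁻¹
  have hquad := (isBigO_refl (· ^ 2) (𝓝 (0 : ℝ))).const_mul_left (phiQuadCoeff (κ / cp) n / cp ^ 2)
  refine (((hsum.add hself).add hquad).mono nhdsWithin_le_nhds).congr' ?_ EventuallyEq.rfl
  filter_upwards [self_mem_nhdsWithin] with r (hr : 0 < r)
  simp only [etaF]
  field_simp
  ring

theorem exists_bound_of_isBigO_nhdsGT {f : ℝ → ℝ} {k : ℕ} (h : f =O[𝓝[>] 0] (· ^ k)) :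
    ∃ ε > (0 : ℝ), ∃ M > (0 : ℝ), ∀ r : ℝ, 0 < r → r < ε → |f r| ≤ M * r ^ k := by
  obtain ⟨M, hM, hMf⟩ := h.exists_pos
  obtain ⟨ε, hε, hsub⟩ := mem_nhdsGT_iff_exists_Ioo_subset.1 hMf.bound
  refine ⟨ε, hε, M, hM, fun r hr hrε => ?_⟩
  simpa [abs_of_pos hr] using hsub ⟨hr, hrε⟩

/-- η_{1,n}(r) = −1/(2c_p²) − 1/(2c_s²) + O(r²) as r → 0⁺. -/
theorem eta_one_asymptotics (κ cs cp : ℝ) (hκ : 0 < κ) (hcs : 0 < cs) (hcp : 0 < cp) (n : ℕ) :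
    (∃ ε > (0 : ℝ), ∃ M > (0 : ℝ), ∀ r : ℝ, 0 < r → r < ε →
      |etaF κ cs cp 1 n r - (-(1 / (2 * cp ^ 2)) - 1 / (2 * cs ^ 2))| ≤ M * r ^ 2) ∧
    Tendsto (fun r => etaF κ cs cp 1 n r) (nhdsWithin 0 (Set.Ioi 0))
      (nhds (-(1 / (2 * cp ^ 2)) - 1 / (2 * cs ^ 2))) := by
  have h := isBigO_etaF_one_sub κ cs cp hκ.ne' hcs.ne' hcp.ne' n
  have hsq : Tendsto (· ^ 2) (𝓝[>] (0 : ℝ)) (𝓝 0) :=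
    (Continuous.tendsto' (by fun_prop) 0 0 (by simp)).mono_left nhdsWithin_le_nhds
  exact ⟨exists_bound_of_isBigO_nhdsGT h, tendsto_sub_nhds_zero_iff.1 (h.trans_tendsto hsq)⟩
end
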